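/- For all α, β > 0 and every κ with 0 < κ < 1, one has the integral representation ∫_{[0,∞)} x^κ m_{α,β}(dx) = (αβ/Γ(1−κ)) ∫_0^∞ exp(−αu/(β+u)) u^{−κ} (β+u)^{−2} du, where Γ denotes the Gamma function. -/

import Mathlib

open MeasureTheory Filter Set
open scoped ENNReal

/-- The modified Bessel function of the first kind of order one,
`I₁(r) = (r/2) Σ_{k=0}^∞ (r²/4)^k / (k!(k+1)!)`. -/
noncomputable def besselI1 (r : ℝ) : ℝ :=
  r / 2 * ∑' k : ℕ, (r ^ 2 / 4) ^ k / ((Nat.factorial k : ℝ) * (Nat.factorial (k + 1) : ℝ))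

/-- The Bessel distribution `m_{α,β}` on `[0,∞)`:
`m_{α,β}(dx) = e^{−α} δ₀(dx) + β e^{−α−βx} √(α/(βx)) I₁(2√(αβx)) dx`. -/
noncomputable def besselMeasure (α β : ℝ) : Measure ℝ :=
  ENNReal.ofReal (Real.exp (-α)) • Measure.dirac (0 : ℝ) +
    MeasureTheory.volume.withDensity fun x =>
      ENNReal.ofReal (Set.indicator (Set.Ioi (0 : ℝ))
        (fun x => β * Real.exp (-α - β * x) * Real.sqrt (α / (β * x)) *
          besselI1 (2 * Real.sqrt (α * β * x))) x)

/-!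
For `x > 0` and `κ < 1` one has `Γ(1 - κ) x ^ κ = x ∫₀^∞ u ^ (-κ) e^{-ux} du`. The atom at `0`
does not see `x ^ κ`, so by Tonelli the moment becomes `∫₀^∞ u ^ (-κ) ∫ x e^{-ux} m(dx) du`.
The inner integral is minus the derivative of the Laplace transform `exp (-α u / (β + u))` of
`m_{α,β}`, i.e. `α β exp (-α u / (β + u)) / (β + u) ^ 2`; it is computed by integrating the
power series of `I₁` term by term against the Gamma integrals `∫ x ^ (k + 1) e^{-(β + u) x} dx`,
which resums to an exponential series.
-/

open Real Nat

lemma HasSum.tsum_ofReal {ι : Type*} {f : ι → ℝ} {a : ℝ} (h : HasSum f a) (hf : ∀ i, 0 ≤ f i) :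
    ∑' i, ENNReal.ofReal (f i) = ENNReal.ofReal a := by
  rw [← h.tsum_eq, ENNReal.ofReal_tsum_of_nonneg hf h.summable]

lemma lintegral_rpow_mul_exp_neg_mul_Ioi {a r : ℝ} (ha : 0 < a) (hr : 0 < r) :
    ∫⁻ t in Ioi 0, ENNReal.ofReal (t ^ (a - 1) * exp (-(r * t))) =
      ENNReal.ofReal ((1 / r) ^ a * Gamma a) := by
  rw [← integral_rpow_mul_exp_neg_mul_Ioi ha hr, ofReal_integral_eq_lintegral_ofReal]
  · have h := integrableOn_rpow_mul_exp_neg_mul_rpow (s := a - 1) (p := 1) (by linarith)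
      zero_lt_one hr
    simp only [rpow_one, neg_mul] at h
    exact h
  · filter_upwards [ae_restrict_mem measurableSet_Ioi] with t ht
    exact mul_nonneg (rpow_nonneg (le_of_lt ht) _) (exp_pos _).le

lemma lintegral_pow_mul_exp_neg_mul_Ioi (n : ℕ) {r : ℝ} (hr : 0 < r) :
    ∫⁻ t in Ioi 0, ENNReal.ofReal (t ^ n * exp (-(r * t))) =
      ENNReal.ofReal (n ! / r ^ (n + 1)) := by
  have h := lintegral_rpow_mul_exp_neg_mul_Ioi (a := n + 1) (by positivity) hr
  rw [add_sub_cancel_right, Gamma_nat_eq_factorial] at h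
  norm_cast at h
  rw [h, one_div, inv_pow, inv_mul_eq_div]

lemma lintegral_rpow_neg_mul_exp_neg_mul_Ioi {x κ : ℝ} (hx : 0 < x) (hκ : κ < 1) :
    ∫⁻ u in Ioi 0, ENNReal.ofReal (u ^ (-κ)) * ENNReal.ofReal (x * exp (-(u * x))) =
      ENNReal.ofReal (Gamma (1 - κ)) * ENNReal.ofReal (x ^ κ) := by
  have hrpow : x * (1 / x) ^ (1 - κ) = x ^ κ := by
    rw [one_div, inv_rpow hx.le, rpow_one_sub' hx.le (by linarith)]
    field_simp
  have hintegrand : ∀ u, ENNReal.ofReal (u ^ (-κ)) * ENNReal.ofReal (x * exp (-(u * x))) =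
      ENNReal.ofReal x * ENNReal.ofReal (u ^ (1 - κ - 1) * exp (-(x * u))) := fun u => by
    rw [← ENNReal.ofReal_mul' (by positivity), ← ENNReal.ofReal_mul hx.le]
    ring_nf
  simp_rw [hintegrand]
  rw [lintegral_const_mul' _ _ ENNReal.ofReal_ne_top,
    lintegral_rpow_mul_exp_neg_mul_Ioi (sub_pos.2 hκ) hx, ← ENNReal.ofReal_mul hx.le,
    ← ENNReal.ofReal_mul (Gamma_nonneg_of_nonneg (sub_pos.2 hκ).le), ← hrpow]
  ring_nf

@[fun_prop]
lemma measurable_besselI1 : Measurable besselI1 := by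
  unfold besselI1
  fun_prop

lemma summable_pow_div_factorial_mul_factorial_succ (y : ℝ) :
    Summable fun k : ℕ => y ^ k / ((k ! : ℝ) * ((k + 1)! : ℝ)) := by
  refine (Real.summable_pow_div_factorial |y|).of_norm_bounded fun k => ?_
  rw [norm_div, norm_pow, Real.norm_eq_abs, norm_of_nonneg (by positivity)]
  exact div_le_div_of_nonneg_left (by positivity) (by positivity)
    (le_mul_of_one_le_right (by positivity) (mod_cast (k + 1).factorial_pos))

lemma besselI1_two_mul_sqrt {y : ℝ} (hy : 0 ≤ y) :
    besselI1 (2 * √y) = √y * ∑' k : ℕ, y ^ k / ((k ! : ℝ) * ((k + 1)! : ℝ)) := by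
  rw [besselI1, mul_pow, sq_sqrt hy]
  ring_nf

noncomputable def besselDensity (α β x : ℝ) : ℝ :=
  β * exp (-α - β * x) * √(α / (β * x)) * besselI1 (2 * √(α * β * x))

lemma besselMeasure_def (α β : ℝ) :
    besselMeasure α β = ENNReal.ofReal (exp (-α)) • Measure.dirac 0 +
      volume.withDensity fun x => ENNReal.ofReal ((Ioi 0).indicator (besselDensity α β) x) :=
  rfl

@[fun_prop]
lemma measurable_besselDensity (α β : ℝ) : Measurable (besselDensity α β) := by
  unfold besselDensity
  fun_prop

lemma hasSum_besselDensity {α β x : ℝ} (hα : 0 ≤ α) (hβ : 0 < β) (hx : 0 < x) :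
    HasSum (fun k : ℕ => exp (-α) * α * β * (α * β) ^ k / ((k ! : ℝ) * ((k + 1)! : ℝ)) *
      (x ^ k * exp (-(β * x)))) (besselDensity α β x) := by
  have hsqrt : √(α / (β * x)) * √(α * β * x) = α := by
    rw [← sqrt_mul (by positivity), show α / (β * x) * (α * β * x) = α ^ 2 by field_simp]
    exact sqrt_sq hα
  have hdens : besselDensity α β x =
      exp (-α) * α * β * exp (-(β * x)) *
        ∑' k : ℕ, (α * β * x) ^ k / ((k ! : ℝ) * ((k + 1)! : ℝ)) := by
    rw [besselDensity, besselI1_two_mul_sqrt (by positivity), sub_eq_add_neg, exp_add]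
    linear_combination (β * exp (-α) * exp (-(β * x)) *
      ∑' k : ℕ, (α * β * x) ^ k / ((k ! : ℝ) * ((k + 1)! : ℝ))) * hsqrt
  rw [hdens]
  exact ((summable_pow_div_factorial_mul_factorial_succ (α * β * x)).hasSum.mul_left _).congr_fun
    fun k => by rw [mul_pow]; ring

lemma lintegral_besselMeasure (α β : ℝ) {g : ℝ → ℝ≥0∞} (hg : Measurable g) :
    ∫⁻ x, g x ∂besselMeasure α β =
      ENNReal.ofReal (exp (-α)) * g 0 +
        ∫⁻ x in Ioi 0, ENNReal.ofReal (besselDensity α β x) * g x := by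
  have hdens : Measurable fun x => ENNReal.ofReal ((Ioi 0).indicator (besselDensity α β) x) :=
    ((measurable_besselDensity α β).indicator measurableSet_Ioi).ennreal_ofReal
  rw [besselMeasure_def, lintegral_add_measure, lintegral_smul_measure, lintegral_dirac,
    lintegral_withDensity_eq_lintegral_mul _ hdens hg, ← lintegral_indicator measurableSet_Ioi]
  congr 1
  refine lintegral_congr fun x => ?_
  by_cases hx : x ∈ Ioi 0 <;> simp [hx]

lemma ae_nonneg_besselMeasure (α β : ℝ) : ∀ᵐ x ∂besselMeasure α β, 0 ≤ x := by
  have hIio : {x : ℝ | ¬0 ≤ x} = Iio 0 := by ext; simp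
  rw [ae_iff, hIio, ← lintegral_indicator_one measurableSet_Iio,
    lintegral_besselMeasure α β (measurable_one.indicator measurableSet_Iio),
    setLIntegral_congr_fun (g := 0) measurableSet_Ioi fun x (hx : 0 < x) => by simp [hx.le]]
  simp

lemma lintegral_besselDensity_mul_mul_exp_neg_mul {α β u : ℝ} (hα : 0 ≤ α) (hβ : 0 < β)
    (hu : 0 < β + u) :
    ∫⁻ x in Ioi 0, ENNReal.ofReal (besselDensity α β x) * ENNReal.ofReal (x * exp (-(u * x))) =
      ENNReal.ofReal (α * β * exp (-α * u / (β + u)) / (β + u) ^ 2) := by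
  set c : ℕ → ℝ := fun k => exp (-α) * α * β * (α * β) ^ k / ((k ! : ℝ) * ((k + 1)! : ℝ))
  have hexpand : ∀ x ∈ Ioi (0 : ℝ),
      ENNReal.ofReal (besselDensity α β x) * ENNReal.ofReal (x * exp (-(u * x))) =
        ∑' k, ENNReal.ofReal (c k) * ENNReal.ofReal (x ^ (k + 1) * exp (-((β + u) * x))) := by
    intro x (hx : 0 < x)
    have hsum := hasSum_besselDensity hα hβ hx
    rw [← ENNReal.ofReal_mul (hsum.nonneg fun k => by positivity),
      ← (hsum.mul_right _).tsum_ofReal fun k => by positivity]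
    refine tsum_congr fun k => ?_
    rw [← ENNReal.ofReal_mul (by positivity), add_mul, neg_add, exp_add]
    simp only [c]
    ring_nf
  have hexp : HasSum (fun k : ℕ => c k * ((k + 1)! / (β + u) ^ (k + 1 + 1)))
      (α * β * exp (-α * u / (β + u)) / (β + u) ^ 2) := by
    have hE : HasSum (fun k : ℕ => (α * β / (β + u)) ^ k / k !) (exp (α * β / (β + u))) := by
      rw [exp_eq_exp_ℝ]
      exact NormedSpace.expSeries_div_hasSum_exp _
    have hval : exp (-α) * α * β / (β + u) ^ 2 * exp (α * β / (β + u)) =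
        α * β * exp (-α * u / (β + u)) / (β + u) ^ 2 := by
      rw [show -α * u / (β + u) = -α + α * β / (β + u) by field_simp; ring, exp_add]
      ring
    rw [← hval]
    refine (hE.mul_left _).congr_fun fun k => ?_
    have hs : β + u ≠ 0 := hu.ne'
    simp only [c, div_pow, pow_succ]
    field_simp
  rw [setLIntegral_congr_fun measurableSet_Ioi hexpand, lintegral_tsum fun k => by fun_prop,
    ← hexp.tsum_ofReal fun k => by positivity]
  refine tsum_congr fun k => ?_
  rw [lintegral_const_mul' _ _ ENNReal.ofReal_ne_top, lintegral_pow_mul_exp_neg_mul_Ioi _ hu,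
    ← ENNReal.ofReal_mul (by positivity)]

lemma lintegral_rpow_besselMeasure {α β κ : ℝ} (hα : 0 < α) (hβ : 0 < β) (hκ0 : 0 < κ)
    (hκ1 : κ < 1) :
    ENNReal.ofReal (Gamma (1 - κ)) * ∫⁻ x, ENNReal.ofReal (x ^ κ) ∂besselMeasure α β =
      ENNReal.ofReal (α * β) *
        ∫⁻ u in Ioi 0, ENNReal.ofReal (exp (-α * u / (β + u)) * u ^ (-κ) / (β + u) ^ 2) := by
  rw [lintegral_besselMeasure α β (by fun_prop), zero_rpow hκ0.ne', ENNReal.ofReal_zero,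
    mul_zero, zero_add, ← lintegral_const_mul' _ _ ENNReal.ofReal_ne_top,
    ← lintegral_const_mul' _ _ ENNReal.ofReal_ne_top]
  calc ∫⁻ x in Ioi 0, ENNReal.ofReal (Gamma (1 - κ)) *
        (ENNReal.ofReal (besselDensity α β x) * ENNReal.ofReal (x ^ κ))
      = ∫⁻ x in Ioi 0, ∫⁻ u in Ioi 0, ENNReal.ofReal (besselDensity α β x) *
          (ENNReal.ofReal (u ^ (-κ)) * ENNReal.ofReal (x * exp (-(u * x)))) := by
        refine setLIntegral_congr_fun measurableSet_Ioi fun x (hx : 0 < x) => ?_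
        rw [lintegral_const_mul' _ _ ENNReal.ofReal_ne_top,
          lintegral_rpow_neg_mul_exp_neg_mul_Ioi hx hκ1]
        ring
    _ = ∫⁻ u in Ioi 0, ∫⁻ x in Ioi 0, ENNReal.ofReal (besselDensity α β x) *
          (ENNReal.ofReal (u ^ (-κ)) * ENNReal.ofReal (x * exp (-(u * x)))) :=
        lintegral_lintegral_swap (by fun_prop)
    _ = _ := by
        refine setLIntegral_congr_fun measurableSet_Ioi fun u (hu : 0 < u) => ?_
        simp_rw [mul_left_comm (ENNReal.ofReal (besselDensity α β _))]
        rw [lintegral_const_mul' _ _ ENNReal.ofReal_ne_top,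
          lintegral_besselDensity_mul_mul_exp_neg_mul hα.le hβ (by linarith),
          ← ENNReal.ofReal_mul (by positivity), ← ENNReal.ofReal_mul (by positivity)]
        congr 1
        ring

theorem bessel_fractional_moment_repr (α β κ : ℝ) (hα : 0 < α) (hβ : 0 < β)
    (hκ0 : 0 < κ) (hκ1 : κ < 1) :
    ∫ x, x ^ κ ∂ besselMeasure α β =
      α * β / Real.Gamma (1 - κ) *
        ∫ u in Set.Ioi (0 : ℝ), Real.exp (-α * u / (β + u)) * u ^ (-κ) / (β + u) ^ 2 := by
  have hΓ : 0 < Gamma (1 - κ) := Gamma_pos_of_pos (by linarith)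
  have hL := integral_eq_lintegral_of_nonneg_ae
    ((ae_nonneg_besselMeasure α β).mono fun x hx => rpow_nonneg hx κ)
    (by fun_prop : Measurable fun x : ℝ => x ^ κ).aestronglyMeasurable
  have hR := integral_eq_lintegral_of_nonneg_ae (μ := volume.restrict (Ioi 0))
    (f := fun u => exp (-α * u / (β + u)) * u ^ (-κ) / (β + u) ^ 2)
    (ae_restrict_of_forall_mem measurableSet_Ioi fun u (hu : 0 < u) => by positivity)
    (by fun_prop : Measurable _).aestronglyMeasurable
  have key := congrArg ENNReal.toReal (lintegral_rpow_besselMeasure hα hβ hκ0 hκ1)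
  rw [ENNReal.toReal_mul, ENNReal.toReal_mul, ENNReal.toReal_ofReal hΓ.le,
    ENNReal.toReal_ofReal (by positivity), ← hL, ← hR] at key
  rw [div_mul_eq_mul_div, eq_div_iff hΓ.ne']
  linarith
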